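/- arXiv:1703.03680 — 7 statements merged into one kernel-verified Lean document; each statement's English description precedes it below -/
import Mathlib

section
/- Let f : ℝ^d → ℝ^d satisfy the dissipativity condition with constants α ≥ 0 and β ∈ ℝ. Let K ∈ ℕ with K ≥ 1, let τ′ ∈ (0, 1] satisfy 2|β|τ′ < 1, let 0 < τ < τ′, and set T := Kτ. Let U_0, …, U_K and Ψ_0, …, Ψ_{K−1} and ξ_0, …, ξ_{K−1} be points of ℝ^d with Ψ_k = U_k + τ f(Ψ_k) and U_{k+1} = Ψ_k + ξ_k for 0 ≤ k ≤ K−1. Define C₂ := (1 + τ′) · max{1, ‖U_0‖² + 2αT/(1 − 2|β|τ′)} · exp(T(1 + 2|β|)/(1 − 2|β|τ′)). Then for every n ∈ ℕ with n ≥ 1, max_{0 ≤ i ≤ K} ‖U_i‖^{2n} ≤ (2C₂)^n · [1 + τ^{−n} (Σ_{i=0}^{K−1} ‖ξ_i‖²)^n]. -/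
/-!
Pairing the implicit equation `Ψ = U + τ f Ψ` with `Ψ` and using dissipativity gives
`(1 - 2|β|τ) ‖Ψ‖² ≤ ‖U‖² + 2τα`, and Young's inequality with weight `τ` gives
`‖Ψ + ξ‖² ≤ (1 + τ) ‖Ψ‖² + (1 + τ⁻¹) ‖ξ‖²`. So `‖U_k‖²` obeys a linear recursion with growth
factor `ρ = (1 + τ)/(1 - 2|β|τ) ≤ exp (τ (1 + 2|β|)/(1 - 2|β|τ'))`, and a discrete Gronwall
argument bounds every `‖U_k‖²` by `C₂ (1 + τ⁻¹ ∑ ‖ξ_i‖²)`. Taking `n`-th powers and using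
`(1 + x)ⁿ ≤ 2ⁿ (1 + xⁿ)` gives the claim.
-/

open scoped RealInnerProductSpace
open Finset

theorem norm_add_sq_le_one_add_mul {E : Type*} [SeminormedAddCommGroup E] (x y : E) {ε : ℝ}
    (hε : 0 < ε) : ‖x + y‖ ^ 2 ≤ (1 + ε) * ‖x‖ ^ 2 + (1 + ε⁻¹) * ‖y‖ ^ 2 := by
  have hyoung := two_mul_le_add_mul_sq (a := ‖x‖) (b := ‖y‖) hε
  calc ‖x + y‖ ^ 2 ≤ (‖x‖ + ‖y‖) ^ 2 := by gcongr; exact norm_add_le x y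
    _ ≤ (1 + ε) * ‖x‖ ^ 2 + (1 + ε⁻¹) * ‖y‖ ^ 2 := by linarith

def IsDissipative {E : Type*} [NormedAddCommGroup E] [InnerProductSpace ℝ E]
    (f : E → E) (α β : ℝ) : Prop :=
  ∀ v, ⟪f v, v⟫ ≤ α + β * ‖v‖ ^ 2

section InnerProduct

variable {E : Type*} [NormedAddCommGroup E] [InnerProductSpace ℝ E] {f : E → E} {α β : ℝ}

theorem IsDissipative.mono {β' : ℝ} (hf : IsDissipative f α β) (hβ : β ≤ β') :
    IsDissipative f α β' := fun v =>
  (hf v).trans (by gcongr)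

theorem IsDissipative.one_sub_mul_norm_sq_le (hf : IsDissipative f α β) {τ : ℝ} (hτ : 0 ≤ τ)
    {a ψ : E} (hψ : ψ = a + τ • f ψ) :
    (1 - 2 * β * τ) * ‖ψ‖ ^ 2 ≤ ‖a‖ ^ 2 + 2 * τ * α := by
  have hexpand : ‖ψ‖ ^ 2 = ⟪a, ψ⟫ + τ * ⟪f ψ, ψ⟫ := by
    rw [← real_inner_self_eq_norm_sq]
    nth_rw 1 [hψ]
    rw [inner_add_left, real_inner_smul_left]
  have hcs : ⟪a, ψ⟫ ≤ (‖a‖ ^ 2 + ‖ψ‖ ^ 2) / 2 := by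
    nlinarith [real_inner_le_norm a ψ, two_mul_le_add_sq ‖a‖ ‖ψ‖]
  have hdiss : τ * ⟪f ψ, ψ⟫ ≤ τ * (α + β * ‖ψ‖ ^ 2) := mul_le_mul_of_nonneg_left (hf ψ) hτ
  linarith

theorem IsDissipative.norm_add_sq_le (hf : IsDissipative f α β) {τ : ℝ} (hτ : 0 < τ)
    (hβτ : 2 * β * τ < 1) {a ψ : E} (hψ : ψ = a + τ • f ψ) (ξ : E) :
    ‖ψ + ξ‖ ^ 2 ≤ (1 + τ) / (1 - 2 * β * τ) * (‖a‖ ^ 2 + 2 * τ * α) + (1 + τ⁻¹) * ‖ξ‖ ^ 2 := by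
  have hψ_le : ‖ψ‖ ^ 2 ≤ (‖a‖ ^ 2 + 2 * τ * α) / (1 - 2 * β * τ) := by
    rw [le_div_iff₀ (by linarith), mul_comm]
    exact hf.one_sub_mul_norm_sq_le hτ.le hψ
  calc ‖ψ + ξ‖ ^ 2 ≤ (1 + τ) * ‖ψ‖ ^ 2 + (1 + τ⁻¹) * ‖ξ‖ ^ 2 := norm_add_sq_le_one_add_mul ψ ξ hτ
    _ ≤ (1 + τ) * ((‖a‖ ^ 2 + 2 * τ * α) / (1 - 2 * β * τ)) + (1 + τ⁻¹) * ‖ξ‖ ^ 2 := by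
      gcongr
    _ = (1 + τ) / (1 - 2 * β * τ) * (‖a‖ ^ 2 + 2 * τ * α) + (1 + τ⁻¹) * ‖ξ‖ ^ 2 := by ring

end InnerProduct

section Gronwall

variable {x b : ℕ → ℝ} {ρ a : ℝ} {K : ℕ}

theorem le_pow_mul_of_le_mul_add (hρ : 1 ≤ ρ) (ha : 0 ≤ a) (hb : ∀ k, 0 ≤ b k)
    (hx : ∀ k < K, x (k + 1) ≤ ρ * (x k + a) + b k) :
    ∀ k ≤ K, x k ≤ ρ ^ k * (x 0 + k * a + ∑ j ∈ range k, b j) := by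
  intro k hk
  induction k with
  | zero => simp
  | succ k ih =>
    calc x (k + 1) ≤ ρ * (x k + a) + b k := hx k hk
      _ ≤ ρ * (ρ ^ k * (x 0 + k * a + ∑ j ∈ range k, b j) + a) + b k := by
        gcongr
        exact ih (by omega)
      _ ≤ ρ ^ (k + 1) * (x 0 + k * a + ∑ j ∈ range k, b j) + ρ ^ (k + 1) * a
          + ρ ^ (k + 1) * b k := by
        have ha' : ρ * a ≤ ρ ^ (k + 1) * a :=
          mul_le_mul_of_nonneg_right (le_self_pow₀ hρ (Nat.succ_ne_zero k)) ha
        have hb' : b k ≤ ρ ^ (k + 1) * b k := le_mul_of_one_le_left (hb k) (one_le_pow₀ hρ)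
        rw [pow_succ'] at ha' hb' ⊢
        linarith
      _ = ρ ^ (k + 1) * (x 0 + (k + 1 : ℕ) * a + ∑ j ∈ range (k + 1), b j) := by
        rw [sum_range_succ]; push_cast; ring

theorem le_pow_mul_of_le_mul_add_of_le (hρ : 1 ≤ ρ) (ha : 0 ≤ a) (hb : ∀ k, 0 ≤ b k)
    (hx0 : 0 ≤ x 0) (hx : ∀ k < K, x (k + 1) ≤ ρ * (x k + a) + b k) {k : ℕ} (hk : k ≤ K) :
    x k ≤ ρ ^ K * (x 0 + K * a + ∑ j ∈ range K, b j) := by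
  have hsum : ∑ j ∈ range k, b j ≤ ∑ j ∈ range K, b j :=
    sum_le_sum_of_subset_of_nonneg (range_subset_range.mpr hk) fun j _ _ => hb j
  have hsum0 : 0 ≤ ∑ j ∈ range k, b j := sum_nonneg fun j _ => hb j
  calc x k ≤ ρ ^ k * (x 0 + k * a + ∑ j ∈ range k, b j) := le_pow_mul_of_le_mul_add hρ ha hb hx k hk
    _ ≤ ρ ^ K * (x 0 + K * a + ∑ j ∈ range K, b j) := by gcongr

end Gronwall

theorem one_add_div_one_sub_pow_le_exp {b τ τ' : ℝ} (hb : 0 ≤ b) (hτ : 0 ≤ τ) (hττ' : τ ≤ τ')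
    (hbτ' : 2 * b * τ' < 1) (K : ℕ) :
    ((1 + τ) / (1 - 2 * b * τ)) ^ K ≤ Real.exp (K * τ * (1 + 2 * b) / (1 - 2 * b * τ')) := by
  have hbτ : 2 * b * τ ≤ 2 * b * τ' := by gcongr
  have hc : 0 < 1 - 2 * b * τ' := by linarith
  have hρ : (1 + τ) / (1 - 2 * b * τ) ≤ Real.exp (τ * (1 + 2 * b) / (1 - 2 * b * τ')) :=
    calc (1 + τ) / (1 - 2 * b * τ) = τ * (1 + 2 * b) / (1 - 2 * b * τ) + 1 := by
          rw [div_add_one (by linarith)]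
          ring_nf
      _ ≤ τ * (1 + 2 * b) / (1 - 2 * b * τ') + 1 := by gcongr
      _ ≤ Real.exp (τ * (1 + 2 * b) / (1 - 2 * b * τ')) := Real.add_one_le_exp _
  calc ((1 + τ) / (1 - 2 * b * τ)) ^ K ≤ Real.exp (τ * (1 + 2 * b) / (1 - 2 * b * τ')) ^ K := by
        gcongr
        exact div_nonneg (by linarith) (by linarith)
    _ = Real.exp (K * τ * (1 + 2 * b) / (1 - 2 * b * τ')) := by
        rw [← Real.exp_nat_mul]; ring_nf

theorem add_add_one_add_inv_mul_le {u A S c τ τ' : ℝ} (hA : 0 ≤ A) (hS : 0 ≤ S) (hc0 : 0 < c)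
    (hc1 : c ≤ 1) (hτ : 0 < τ) (hττ' : τ ≤ τ') :
    u + A + (1 + τ⁻¹) * S ≤ (1 + τ') * max 1 (u + A / c) * (1 + τ⁻¹ * S) := by
  have hM1 : 1 ≤ max 1 (u + A / c) := le_max_left _ _
  have huA : u + A ≤ max 1 (u + A / c) :=
    le_max_of_le_right (by gcongr; exact le_div_self hA hc0 hc1)
  have hτS : 0 ≤ τ⁻¹ * S := by positivity
  have hS_le : S ≤ τ' * (τ⁻¹ * S) := by
    calc S = τ * (τ⁻¹ * S) := by field_simp
      _ ≤ τ' * (τ⁻¹ * S) := by gcongr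
  nlinarith [mul_le_mul_of_nonneg_right hM1 hτS]

theorem pow_le_two_mul_pow_mul_one_add_pow {y C x : ℝ} (hy : 0 ≤ y) (hx : 0 ≤ x)
    (h : y ≤ C * (1 + x)) (n : ℕ) : y ^ n ≤ (2 * C) ^ n * (1 + x ^ n) := by
  have hC : 0 ≤ C := nonneg_of_mul_nonneg_left (hy.trans h) (by positivity)
  calc y ^ n ≤ C ^ n * (1 + x) ^ n := by rw [← mul_pow]; gcongr
    _ ≤ C ^ n * (2 ^ (n - 1) * (1 + x ^ n)) := by
      gcongr
      simpa using add_pow_le zero_le_one hx n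
    _ ≤ C ^ n * (2 ^ n * (1 + x ^ n)) := by
      gcongr
      · norm_num
      · omega
    _ = (2 * C) ^ n * (1 + x ^ n) := by ring

theorem uniform_bound_numerical_solution_general (d : ℕ)
    (f : EuclideanSpace ℝ (Fin d) → EuclideanSpace ℝ (Fin d))
    (α β : ℝ) (hα : 0 ≤ α)
    (hdiss : ∀ v : EuclideanSpace ℝ (Fin d), ⟪f v, v⟫ ≤ α + β * ‖v‖ ^ 2)
    (K : ℕ)
    (τ' τ : ℝ) (hβτ' : 2 * |β| * τ' < 1)
    (hτ0 : 0 < τ) (hττ' : τ < τ')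
    (T : ℝ) (hT : T = K * τ)
    (U Ψ ξ : ℕ → EuclideanSpace ℝ (Fin d))
    (hrec : ∀ k < K, Ψ k = U k + τ • f (Ψ k) ∧ U (k + 1) = Ψ k + ξ k)
    (C2 : ℝ)
    (hC2 : C2 = (1 + τ') * max 1 (‖U 0‖ ^ 2 + 2 * α * T / (1 - 2 * |β| * τ'))
      * Real.exp (T * (1 + 2 * |β|) / (1 - 2 * |β| * τ')))
    (n : ℕ) :
    (Finset.range (K + 1)).sup' ⟨0, Finset.mem_range.mpr (Nat.succ_pos K)⟩
        (fun i => ‖U i‖ ^ (2 * n))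
      ≤ (2 * C2) ^ n * (1 + τ⁻¹ ^ n * (∑ i ∈ Finset.range K, ‖ξ i‖ ^ 2) ^ n) := by
  subst hT
  have hβτ : 2 * |β| * τ < 1 := lt_of_le_of_lt (by gcongr) hβτ'
  set ρ := (1 + τ) / (1 - 2 * |β| * τ)
  have hρ : 1 ≤ ρ := by rw [le_div_iff₀ (by linarith)]; nlinarith [abs_nonneg β]
  have hstep (k : ℕ) (hk : k < K) :
      ‖U (k + 1)‖ ^ 2 ≤ ρ * (‖U k‖ ^ 2 + 2 * τ * α) + (1 + τ⁻¹) * ‖ξ k‖ ^ 2 := by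
    obtain ⟨hΨ, hU⟩ := hrec k hk
    rw [hU]
    exact (IsDissipative.mono hdiss (le_abs_self β)).norm_add_sq_le hτ0 hβτ hΨ (ξ k)
  set S := ∑ i ∈ Finset.range K, ‖ξ i‖ ^ 2
  have hbound (i : ℕ) (hi : i ≤ K) : ‖U i‖ ^ 2 ≤ C2 * (1 + τ⁻¹ * S) := by
    calc ‖U i‖ ^ 2 ≤ ρ ^ K * (‖U 0‖ ^ 2 + K * (2 * τ * α) + ∑ j ∈ range K, (1 + τ⁻¹) * ‖ξ j‖ ^ 2) :=
          le_pow_mul_of_le_mul_add_of_le (x := fun k => ‖U k‖ ^ 2)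
            (b := fun j => (1 + τ⁻¹) * ‖ξ j‖ ^ 2) hρ (by positivity) (fun _ => by positivity)
            (sq_nonneg _) hstep hi
      _ = ρ ^ K * (‖U 0‖ ^ 2 + 2 * α * (K * τ) + (1 + τ⁻¹) * S) := by rw [← mul_sum]; ring
      _ ≤ _ := mul_le_mul
          (one_add_div_one_sub_pow_le_exp (abs_nonneg β) hτ0.le hττ'.le hβτ' K)
          (add_add_one_add_inv_mul_le (c := 1 - 2 * |β| * τ') (by positivity) (by positivity)
            (by linarith) (by nlinarith [abs_nonneg β]) hτ0 hττ'.le)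
          (by positivity) (by positivity)
      _ = C2 * (1 + τ⁻¹ * S) := by rw [hC2]; ring
  refine Finset.sup'_le _ _ fun i hi => ?_
  rw [pow_mul, ← mul_pow]
  exact pow_le_two_mul_pow_mul_one_add_pow (by positivity) (by positivity)
    (hbound i (Nat.lt_succ_iff.mp (Finset.mem_range.mp hi))) n

/-- pathwise uniform bound on the randomised implicit Euler iterates
(Lemma "Uniform bounds on numerical solution"). -/
theorem uniform_bound_numerical_solution (d : ℕ)
    (f : EuclideanSpace ℝ (Fin d) → EuclideanSpace ℝ (Fin d))
    (α β : ℝ) (hα : 0 ≤ α)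
    (hdiss : ∀ v : EuclideanSpace ℝ (Fin d), ⟪f v, v⟫ ≤ α + β * ‖v‖ ^ 2)
    (K : ℕ) (hK : 1 ≤ K)
    (τ' τ : ℝ) (hτ'0 : 0 < τ') (hτ'1 : τ' ≤ 1) (hβτ' : 2 * |β| * τ' < 1)
    (hτ0 : 0 < τ) (hττ' : τ < τ')
    (T : ℝ) (hT : T = K * τ)
    (U Ψ ξ : ℕ → EuclideanSpace ℝ (Fin d))
    (hrec : ∀ k < K, Ψ k = U k + τ • f (Ψ k) ∧ U (k + 1) = Ψ k + ξ k)
    (C2 : ℝ)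
    (hC2 : C2 = (1 + τ') * max 1 (‖U 0‖ ^ 2 + 2 * α * T / (1 - 2 * |β| * τ'))
      * Real.exp (T * (1 + 2 * |β|) / (1 - 2 * |β| * τ')))
    (n : ℕ) (hn : 1 ≤ n) :
    (Finset.range (K + 1)).sup' ⟨0, Finset.mem_range.mpr (Nat.succ_pos K)⟩
        (fun i => ‖U i‖ ^ (2 * n))
      ≤ (2 * C2) ^ n * (1 + τ⁻¹ ^ n * (∑ i ∈ Finset.range K, ‖ξ i‖ ^ 2) ^ n) :=
  uniform_bound_numerical_solution_general d f α β hα hdiss K τ' τ hβτ' hτ0 hττ' T hT U Ψ ξ hrec C2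
    hC2 n
end

section
/- Let f : ℝ^d → ℝ^d satisfy the dissipativity condition with constants α ≥ 0 and β ∈ ℝ. Let K ∈ ℕ with K ≥ 1, let τ′ ∈ (0, 1] satisfy 2|β|τ′ < 1, let 0 < τ < τ′, and let p ≥ 1/2, C_ξ > 0. On a probability space (Ω, ℱ, ℙ) let ξ_0, …, ξ_{K−1} : Ω → ℝ^d be random vectors such that (𝔼[‖ξ_k‖^{2m}])^{1/(2m)} ≤ C_ξ τ^p for every k and every integer m ≥ 1, and let U_0, …, U_K and Ψ_0, …, Ψ_{K−1} be measurable random vectors with U_0 deterministic, Ψ_k = U_k + τ f(Ψ_k) and U_{k+1} = Ψ_k + ξ_k almost surely. Then for every ρ ∈ ℝ the exponential moment 𝔼[exp(ρ · max_{0 ≤ i ≤ K} ‖U_i‖²)] is finite. -/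
open scoped RealInnerProductSpace
open MeasureTheory Finset

/-- Auxiliary: norm bound for an implicit Euler point under dissipativity. -/
lemma psi_norm_bound {d : ℕ}
    (f : EuclideanSpace ℝ (Fin d) → EuclideanSpace ℝ (Fin d))
    (α β : ℝ) (hα : 0 ≤ α)
    (hdiss : ∀ v : EuclideanSpace ℝ (Fin d), ⟪f v, v⟫ ≤ α + β * ‖v‖ ^ 2)
    (τ : ℝ) (hτ0 : 0 < τ) (hτ1 : τ ≤ 1) (hβτ : τ * |β| ≤ 1 / 2)
    (u ψ : EuclideanSpace ℝ (Fin d)) (hψ : ψ = u + τ • f ψ) :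
    ‖ψ‖ ≤ 2 * ‖u‖ + 2 + 2 * α := by
  have h1 : ‖ψ‖ ^ 2 = ⟪u, ψ⟫ + τ * ⟪f ψ, ψ⟫ := by
    have h := congrArg (fun x => ⟪x, ψ⟫) hψ
    simp only [inner_add_left, real_inner_smul_left] at h
    rw [← real_inner_self_eq_norm_sq]
    exact h
  have h2 : ⟪u, ψ⟫ ≤ ‖u‖ * ‖ψ‖ := real_inner_le_norm u ψ
  have h3 : ⟪f ψ, ψ⟫ ≤ α + β * ‖ψ‖ ^ 2 := hdiss ψ
  have hβ : β ≤ |β| := le_abs_self β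
  have hψ2 : (0:ℝ) ≤ ‖ψ‖ ^ 2 := sq_nonneg _
  have h4 : τ * (β * ‖ψ‖ ^ 2) ≤ (1/2) * ‖ψ‖ ^ 2 := by
    have : τ * β ≤ τ * |β| := by nlinarith
    nlinarith
  have h5 : ‖ψ‖ ^ 2 ≤ 2 * (‖u‖ * ‖ψ‖) + 2 * α := by nlinarith
  nlinarith [norm_nonneg ψ, norm_nonneg u, sq_nonneg (‖ψ‖ - 2*‖u‖ - 2 - 2*α)]

/-- finiteness of the moment generating function of the maximum of the
randomised implicit Euler numerical solution. -/
theorem finite_mgf_max_numerical_solution (d : ℕ)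
    (f : EuclideanSpace ℝ (Fin d) → EuclideanSpace ℝ (Fin d))
    (α β : ℝ) (hα : 0 ≤ α)
    (hdiss : ∀ v : EuclideanSpace ℝ (Fin d), ⟪f v, v⟫ ≤ α + β * ‖v‖ ^ 2)
    (K : ℕ) (hK : 1 ≤ K)
    (τ' τ : ℝ) (hτ'0 : 0 < τ') (hτ'1 : τ' ≤ 1) (hβτ' : 2 * |β| * τ' < 1)
    (hτ0 : 0 < τ) (hττ' : τ < τ')
    (p Cxi : ℝ) (hp : 1 / 2 ≤ p) (hCxi : 0 < Cxi)
    (Ω : Type) [MeasurableSpace Ω] (μ : Measure Ω) [IsProbabilityMeasure μ]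
    (ξ U Ψ : ℕ → Ω → EuclideanSpace ℝ (Fin d))
    (hmeasξ : ∀ k, Measurable (ξ k))
    (hmeasU : ∀ i, Measurable (U i))
    (hmeasΨ : ∀ k, Measurable (Ψ k))
    (hintξ : ∀ k < K, ∀ m : ℕ, 1 ≤ m → Integrable (fun ω => ‖ξ k ω‖ ^ (2 * m)) μ)
    (hmom : ∀ k < K, ∀ m : ℕ, 1 ≤ m →
      (∫ ω, ‖ξ k ω‖ ^ (2 * m) ∂μ) ^ (1 / (2 * (m : ℝ))) ≤ Cxi * τ ^ p)
    (U0 : EuclideanSpace ℝ (Fin d)) (hU0 : ∀ ω, U 0 ω = U0)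
    (hrec : ∀ k < K, ∀ᵐ ω ∂μ,
      Ψ k ω = U k ω + τ • f (Ψ k ω) ∧ U (k + 1) ω = Ψ k ω + ξ k ω) :
    ∀ ρ : ℝ, Integrable (fun ω =>
      Real.exp (ρ * (Finset.range (K + 1)).sup' ⟨0, Finset.mem_range.mpr (Nat.succ_pos K)⟩
        (fun i => ‖U i ω‖ ^ 2))) μ := by
  intro ρ
  have hne : (Finset.range (K + 1)).Nonempty := ⟨0, Finset.mem_range.mpr (Nat.succ_pos K)⟩
  set c : ℝ := Cxi * τ ^ p with hc
  have hc0 : 0 < c := mul_pos hCxi (Real.rpow_pos_of_pos hτ0 p)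
  -- Step 1: the noise is a.s. bounded by c
  have hξbd : ∀ k, k < K → ∀ᵐ ω ∂μ, ‖ξ k ω‖ ≤ c := by
    intro k hk
    have hnull : ∀ n : ℕ, μ {ω | c * (1 + 1/((n:ℝ)+1)) ≤ ‖ξ k ω‖} = 0 := by
      intro n
      by_contra hpos
      set cn : ℝ := c * (1 + 1/((n:ℝ)+1)) with hcndef
      have hn1 : (0:ℝ) < (n:ℝ) + 1 := by positivity
      have hccn : c < cn := by
        have h1 : (0:ℝ) < 1/((n:ℝ)+1) := by positivity
        nlinarith
      have hcn0 : 0 < cn := hc0.trans hccn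
      have hεpos : 0 < (μ {ω | cn ≤ ‖ξ k ω‖}).toReal :=
        ENNReal.toReal_pos hpos (measure_ne_top μ _)
      set ε : ℝ := (μ {ω | cn ≤ ‖ξ k ω‖}).toReal with hεdef
      have hr : 1 < (cn/c)^2 := by
        have : 1 < cn/c := (one_lt_div hc0).2 hccn
        nlinarith
      obtain ⟨m0, hm0⟩ := pow_unbounded_of_one_lt (1/ε) hr
      set m : ℕ := m0 + 1 with hmdef
      have hm1 : 1 ≤ m := Nat.le_add_left 1 m0
      have hgt : 1/ε < (cn/c)^(2*m) := by
        calc 1/ε < ((cn/c)^2)^m0 := hm0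
          _ ≤ ((cn/c)^2)^m := pow_le_pow_right₀ hr.le (Nat.le_succ m0)
          _ = (cn/c)^(2*m) := by rw [← pow_mul]
      have hint := hintξ k hk m hm1
      have hmome := hmom k hk m hm1
      have hI0 : 0 ≤ ∫ ω, ‖ξ k ω‖^(2*m) ∂μ := integral_nonneg fun ω => by positivity
      have hIub : ∫ ω, ‖ξ k ω‖^(2*m) ∂μ ≤ c^(2*m) := by
        have key : ((∫ ω, ‖ξ k ω‖^(2*m) ∂μ) ^ (1/(2*(m:ℝ)))) ^ (2*m : ℕ) ≤ c ^ (2*m : ℕ) :=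
          pow_le_pow_left₀ (Real.rpow_nonneg hI0 _) hmome _
        have heq : ((∫ ω, ‖ξ k ω‖^(2*m) ∂μ) ^ (1/(2*(m:ℝ)))) ^ (2*m : ℕ)
            = ∫ ω, ‖ξ k ω‖^(2*m) ∂μ := by
          rw [← Real.rpow_natCast (_ ^ (1/(2*(m:ℝ)))) (2*m), ← Real.rpow_mul hI0]
          have hm0' : (m:ℝ) ≠ 0 := Nat.cast_ne_zero.2 (by omega)
          have : 1/(2*(m:ℝ)) * ((2*m : ℕ) : ℝ) = 1 := by
            push_cast
            field_simp
          rw [this, Real.rpow_one]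
        rwa [heq] at key
      have hmarkov := mul_meas_ge_le_integral_of_nonneg
        (ae_of_all μ fun ω => by positivity) hint (cn^(2*m))
      have hsub : {ω | cn ≤ ‖ξ k ω‖} ⊆ {ω | cn^(2*m) ≤ ‖ξ k ω‖^(2*m)} :=
        fun ω hω => pow_le_pow_left₀ hcn0.le hω _
      have hchain : cn^(2*m) * ε ≤ c^(2*m) := by
        calc cn^(2*m) * ε
            ≤ cn^(2*m) * (μ {ω | cn^(2*m) ≤ ‖ξ k ω‖^(2*m)}).toReal := by
              apply mul_le_mul_of_nonneg_left _ (by positivity)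
              exact ENNReal.toReal_mono (measure_ne_top μ _) (measure_mono hsub)
          _ ≤ ∫ ω, ‖ξ k ω‖^(2*m) ∂μ := hmarkov
          _ ≤ c^(2*m) := hIub
      rw [div_pow, div_lt_div_iff₀ hεpos (pow_pos hc0 _)] at hgt
      nlinarith
    have hmz : μ {ω | ¬ ‖ξ k ω‖ ≤ c} = 0 := by
      apply measure_mono_null _ (measure_iUnion_null hnull)
      intro ω hω
      simp only [Set.mem_setOf_eq, not_le] at hω
      have hpos : 0 < ‖ξ k ω‖ - c := sub_pos.2 hω
      obtain ⟨n, hn⟩ := exists_nat_gt (c / (‖ξ k ω‖ - c))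
      refine Set.mem_iUnion.2 ⟨n, ?_⟩
      simp only [Set.mem_setOf_eq]
      have hlt : c / (‖ξ k ω‖ - c) < (n:ℝ) + 1 := hn.trans (by linarith)
      rw [div_lt_iff₀ hpos] at hlt
      have hn1 : (0:ℝ) < (n:ℝ) + 1 := by positivity
      rw [mul_add, mul_one]
      have : c * (1/((n:ℝ)+1)) ≤ ‖ξ k ω‖ - c := by
        rw [mul_one_div, div_le_iff₀ hn1]
        nlinarith
      linarith
    exact ae_iff.2 hmz
  -- combine a.e. statements
  have hAE : ∀ᵐ ω ∂μ, ∀ k, k < K →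
      (Ψ k ω = U k ω + τ • f (Ψ k ω) ∧ U (k + 1) ω = Ψ k ω + ξ k ω) ∧ ‖ξ k ω‖ ≤ c := by
    rw [ae_all_iff]
    intro k
    by_cases hk : k < K
    · filter_upwards [hrec k hk, hξbd k hk] with ω h1 h2 _
      exact ⟨h1, h2⟩
    · exact ae_of_all μ fun ω hk' => absurd hk' hk
  -- deterministic bound
  set M : ℕ → ℝ := fun n => 3^n * (‖U0‖ + 2 + 2*α + c) with hMdef
  have hBpos : 0 < ‖U0‖ + 2 + 2*α + c := by positivity
  have hM0 : ∀ n, 0 ≤ M n := fun n => by positivity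
  have hMstep : ∀ n : ℕ, 2 * M n + 2 + 2*α + c ≤ M (n+1) := by
    intro n
    have h3n : (1:ℝ) ≤ 3^n := one_le_pow₀ (by norm_num)
    have : M n ≥ ‖U0‖ + 2 + 2*α + c := by
      simp only [hMdef]
      nlinarith
    have hM3 : M (n+1) = 3 * M n := by
      simp only [hMdef, pow_succ]
      ring
    nlinarith [norm_nonneg U0, hc0]
  have hβτ : τ * |β| ≤ 1/2 := by
    have h1 : τ * |β| ≤ τ' * |β| :=
      mul_le_mul_of_nonneg_right hττ'.le (abs_nonneg β)
    nlinarith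
  have key : ∀ᵐ ω ∂μ, ∀ i, i ≤ K → ‖U i ω‖ ≤ M i := by
    filter_upwards [hAE] with ω hω
    intro i
    induction i with
    | zero =>
      intro _
      rw [hU0]
      simp only [hMdef, pow_zero, one_mul]
      linarith [hc0, hα]
    | succ i ih =>
      intro hiK
      have hiK' : i < K := Nat.lt_of_succ_le hiK
      obtain ⟨⟨hΨeq, hUeq⟩, hξ⟩ := hω i hiK'
      have hΨ : ‖Ψ i ω‖ ≤ 2 * ‖U i ω‖ + 2 + 2*α :=
        psi_norm_bound f α β hα hdiss τ hτ0 (le_of_lt (hττ'.trans_le hτ'1)) hβτ _ _ hΨeq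
      have hU : ‖U i ω‖ ≤ M i := ih (le_of_lt hiK')
      calc ‖U (i+1) ω‖ = ‖Ψ i ω + ξ i ω‖ := by rw [hUeq]
        _ ≤ ‖Ψ i ω‖ + ‖ξ i ω‖ := norm_add_le _ _
        _ ≤ 2 * M i + 2 + 2*α + c := by linarith
        _ ≤ M (i+1) := hMstep i
  set N : ℝ := (Finset.range (K+1)).sup' hne (fun i => (M i)^2) with hNdef
  -- measurability
  have hmeasS : Measurable fun ω => (Finset.range (K+1)).sup'
      ⟨0, Finset.mem_range.mpr (Nat.succ_pos K)⟩ (fun i => ‖U i ω‖^2) := by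
    have h := Finset.measurable_sup' (f := fun i (ω : Ω) => ‖U i ω‖^2) hne
      (fun i _ => (hmeasU i).norm.pow_const 2)
    have heq : (fun ω => (Finset.range (K+1)).sup'
        ⟨0, Finset.mem_range.mpr (Nat.succ_pos K)⟩ (fun i => ‖U i ω‖^2))
        = (Finset.range (K+1)).sup' hne (fun i (ω : Ω) => ‖U i ω‖^2) := by
      funext ω
      rw [Finset.sup'_apply]
    rw [heq]
    exact h
  -- a.e. bound for the integrand
  have hbound : ∀ᵐ ω ∂μ, ‖Real.exp (ρ * (Finset.range (K+1)).sup'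
      ⟨0, Finset.mem_range.mpr (Nat.succ_pos K)⟩ (fun i => ‖U i ω‖^2))‖
      ≤ Real.exp (|ρ| * N) := by
    filter_upwards [key] with ω hω
    rw [Real.norm_eq_abs, Real.abs_exp]
    apply Real.exp_le_exp.2
    set S : ℝ := (Finset.range (K+1)).sup'
      ⟨0, Finset.mem_range.mpr (Nat.succ_pos K)⟩ (fun i => ‖U i ω‖^2) with hSdef
    have hS0 : 0 ≤ S :=
      le_trans (sq_nonneg ‖U 0 ω‖)
        (Finset.le_sup' (fun i => ‖U i ω‖^2) (Finset.mem_range.mpr (Nat.succ_pos K)))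
    have hSN : S ≤ N := by
      apply Finset.sup'_le
      intro i hi
      have hiK : i ≤ K := Nat.lt_succ_iff.1 (Finset.mem_range.1 hi)
      calc ‖U i ω‖^2 ≤ (M i)^2 := pow_le_pow_left₀ (norm_nonneg _) (hω i hiK) 2
        _ ≤ N := Finset.le_sup' (fun i => (M i)^2) hi
    calc ρ * S ≤ |ρ| * S := mul_le_mul_of_nonneg_right (le_abs_self ρ) hS0
      _ ≤ |ρ| * N := mul_le_mul_of_nonneg_left hSN (abs_nonneg ρ)
  exact Integrable.mono' (integrable_const (Real.exp (|ρ| * N)))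
    (Real.measurable_exp.comp (measurable_const.mul hmeasS)).aestronglyMeasurable hbound
end

section
/- Let f : ℝ^d → ℝ^d satisfy the dissipativity condition with constants α ≥ 0 and β ∈ ℝ. Let τ > 0 with 2|β|τ < 1, let a ∈ ℝ^d, and let ψ ∈ ℝ^d satisfy ψ = a + τ f(ψ). Then ‖ψ‖² ≤ (‖a‖² + 2ατ)/(1 − 2βτ) ≤ (‖a‖² + 2ατ)/(1 − 2|β|τ). -/
open scoped RealInnerProductSpace

/-- basic a priori bound on the implicit Euler step under dissipativity. -/
theorem implicit_euler_step_bound (d : ℕ)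
    (f : EuclideanSpace ℝ (Fin d) → EuclideanSpace ℝ (Fin d))
    (α β : ℝ) (hα : 0 ≤ α)
    (hdiss : ∀ v : EuclideanSpace ℝ (Fin d), ⟪f v, v⟫ ≤ α + β * ‖v‖ ^ 2)
    (τ : ℝ) (hτ : 0 < τ) (hβτ : 2 * |β| * τ < 1)
    (a ψ : EuclideanSpace ℝ (Fin d)) (hψ : ψ = a + τ • f ψ) :
    ‖ψ‖ ^ 2 ≤ (‖a‖ ^ 2 + 2 * α * τ) / (1 - 2 * β * τ) ∧
      (‖a‖ ^ 2 + 2 * α * τ) / (1 - 2 * β * τ)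
        ≤ (‖a‖ ^ 2 + 2 * α * τ) / (1 - 2 * |β| * τ) := by
  have hβle : β ≤ |β| := le_abs_self β
  have habs : 0 < 1 - 2 * |β| * τ := by linarith
  have hden : 0 < 1 - 2 * β * τ := by
    have : 2 * β * τ ≤ 2 * |β| * τ := by nlinarith [hτ.le]
    linarith
  have hkey : (1 - 2 * β * τ) * ‖ψ‖ ^ 2 ≤ ‖a‖ ^ 2 + 2 * α * τ := by
    have h1 : ⟪ψ, ψ⟫ = ⟪a, ψ⟫ + τ * ⟪f ψ, ψ⟫ := by
      nth_rewrite 1 [hψ]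
      rw [inner_add_left, real_inner_smul_left]
    have h2 : ⟪ψ, ψ⟫ = ‖ψ‖ ^ 2 := real_inner_self_eq_norm_sq ψ
    have h3 : ⟪a, ψ⟫ ≤ ‖a‖ * ‖ψ‖ := real_inner_le_norm a ψ
    have h4 : ⟪f ψ, ψ⟫ ≤ α + β * ‖ψ‖ ^ 2 := hdiss ψ
    have h5 : ‖a‖ * ‖ψ‖ ≤ (‖a‖ ^ 2 + ‖ψ‖ ^ 2) / 2 := by nlinarith [sq_nonneg (‖a‖ - ‖ψ‖)]
    nlinarith [hτ.le]
  constructor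
  · rw [le_div_iff₀ hden]
    linarith [hkey]
  · apply div_le_div_of_nonneg_left _ habs
    · nlinarith [hτ.le]
    · positivity
end

section
/- Let f : ℝ^d → ℝ^d satisfy the dissipativity condition with constants α ≥ 0 and β ∈ ℝ. Let τ > 0 with 2|β|τ < 1, let a, ξ ∈ ℝ^d, let ψ ∈ ℝ^d satisfy ψ = a + τ f(ψ), and set U := ψ + ξ. Then ‖U‖² ≤ ((1 + τ)/(1 − 2|β|τ)) · (‖a‖² + 2ατ) + ((1 + τ)/τ) · ‖ξ‖². -/
open scoped RealInnerProductSpace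

/-- one-step squared-norm recursion for the randomised implicit Euler scheme
under dissipativity. -/
theorem randomised_implicit_euler_one_step_bound (d : ℕ)
    (f : EuclideanSpace ℝ (Fin d) → EuclideanSpace ℝ (Fin d))
    (α β : ℝ) (hα : 0 ≤ α)
    (hdiss : ∀ v : EuclideanSpace ℝ (Fin d), ⟪f v, v⟫ ≤ α + β * ‖v‖ ^ 2)
    (τ : ℝ) (hτ : 0 < τ) (hβτ : 2 * |β| * τ < 1)
    (a ξ ψ U : EuclideanSpace ℝ (Fin d)) (hψ : ψ = a + τ • f ψ) (hU : U = ψ + ξ) :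
    ‖U‖ ^ 2 ≤ ((1 + τ) / (1 - 2 * |β| * τ)) * (‖a‖ ^ 2 + 2 * α * τ)
      + ((1 + τ) / τ) * ‖ξ‖ ^ 2 := by
  have ha : a = ψ - τ • f ψ := by rw [eq_sub_iff_add_eq]; exact hψ.symm
  have h1 : ‖a‖ ^ 2 = ‖ψ‖ ^ 2 - 2 * (τ * ⟪f ψ, ψ⟫) + τ ^ 2 * ‖f ψ‖ ^ 2 := by
    rw [ha, norm_sub_sq_real, real_inner_smul_right, norm_smul, real_inner_comm]
    simp [mul_pow, abs_of_pos hτ]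
  have hc : 0 < 1 - 2 * |β| * τ := by linarith
  have hβ : β ≤ |β| := le_abs_self β
  have hψ2 : (0:ℝ) ≤ ‖ψ‖ ^ 2 := sq_nonneg _
  have h2 : (1 - 2 * |β| * τ) * ‖ψ‖ ^ 2 ≤ ‖a‖ ^ 2 + 2 * α * τ := by
    have hd := hdiss ψ
    have h2τ : 2 * τ * ⟪f ψ, ψ⟫ ≤ 2 * τ * (α + β * ‖ψ‖ ^ 2) :=
      mul_le_mul_of_nonneg_left hd (by positivity)
    have habs : β * ‖ψ‖ ^ 2 ≤ |β| * ‖ψ‖ ^ 2 := mul_le_mul_of_nonneg_right hβ hψ2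
    nlinarith [sq_nonneg (τ * ‖f ψ‖)]
  have hψle : ‖ψ‖ ^ 2 ≤ (‖a‖ ^ 2 + 2 * α * τ) / (1 - 2 * |β| * τ) :=
    (le_div_iff₀ hc).mpr (by linarith [h2])
  have hU2 : ‖U‖ ^ 2 = ‖ψ‖ ^ 2 + 2 * ⟪ψ, ξ⟫ + ‖ξ‖ ^ 2 := by
    rw [hU, norm_add_sq_real]
  have hinner : ⟪ψ, ξ⟫ ≤ ‖ψ‖ * ‖ξ‖ := real_inner_le_norm ψ ξ
  have hr : ‖ξ‖ ^ 2 / τ * τ = ‖ξ‖ ^ 2 := div_mul_cancel₀ _ hτ.ne'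
  have hyoung : 2 * ⟪ψ, ξ⟫ ≤ τ * ‖ψ‖ ^ 2 + ‖ξ‖ ^ 2 / τ := by
    nlinarith [sq_nonneg (τ * ‖ψ‖ - ‖ξ‖), hinner, hτ,
      mul_nonneg (norm_nonneg (ψ:EuclideanSpace ℝ (Fin d))) (norm_nonneg (ξ:EuclideanSpace ℝ (Fin d)))]
  have h3 : ‖U‖ ^ 2 ≤ (1 + τ) * ‖ψ‖ ^ 2 + ((1 + τ) / τ) * ‖ξ‖ ^ 2 := by
    have he : (1 + τ) / τ = 1 + 1 / τ := by field_simp; ring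
    rw [hU2, he]
    have hx : ‖ξ‖ ^ 2 / τ = (1 / τ) * ‖ξ‖ ^ 2 := by ring
    nlinarith [hyoung]
  have hfin : (1 + τ) * ‖ψ‖ ^ 2 ≤ ((1 + τ) / (1 - 2 * |β| * τ)) * (‖a‖ ^ 2 + 2 * α * τ) := by
    rw [div_mul_eq_mul_div, mul_div_assoc]
    exact mul_le_mul_of_nonneg_left hψle (by linarith)
  linarith
end

section
/- Let f : ℝ^d → ℝ^d satisfy the dissipativity condition with constants α ≥ 0 and β ∈ ℝ. Let τ > 0 with 2|β|τ < 1, let a ∈ ℝ^d, let ψ ∈ ℝ^d satisfy ψ = a + τ f(ψ), and let m ∈ ℕ with m ≥ 1. Then ‖ψ‖^{2m} ≤ (2^{m−1}/(1 − 2|β|τ)^m) · (‖a‖^{2m} + (2ατ)^m). -/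
open scoped RealInnerProductSpace

/-- even-power bound on the implicit Euler step under dissipativity. -/
theorem implicit_euler_step_even_power_bound (d : ℕ)
    (f : EuclideanSpace ℝ (Fin d) → EuclideanSpace ℝ (Fin d))
    (α β : ℝ) (hα : 0 ≤ α)
    (hdiss : ∀ v : EuclideanSpace ℝ (Fin d), ⟪f v, v⟫ ≤ α + β * ‖v‖ ^ 2)
    (τ : ℝ) (hτ : 0 < τ) (hβτ : 2 * |β| * τ < 1)
    (a ψ : EuclideanSpace ℝ (Fin d)) (hψ : ψ = a + τ • f ψ)
    (m : ℕ) (hm : 1 ≤ m) :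
    ‖ψ‖ ^ (2 * m) ≤ ((2 : ℝ) ^ (m - 1) / (1 - 2 * |β| * τ) ^ m)
      * (‖a‖ ^ (2 * m) + (2 * α * τ) ^ m) := by
  have hden : 0 < 1 - 2 * |β| * τ := by linarith
  -- key quadratic bound
  have hinner : ⟪ψ, ψ⟫ = ⟪a, ψ⟫ + τ * ⟪f ψ, ψ⟫ := by
    nth_rewrite 1 [hψ]
    rw [inner_add_left, real_inner_smul_left]
  have h1 : ⟪a, ψ⟫ ≤ ‖a‖ * ‖ψ‖ := real_inner_le_norm a ψ
  have h2 : ⟪f ψ, ψ⟫ ≤ α + β * ‖ψ‖ ^ 2 := hdiss ψ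
  have hself : ⟪ψ, ψ⟫ = ‖ψ‖ ^ 2 := real_inner_self_eq_norm_sq ψ
  have hβ : β ≤ |β| := le_abs_self β
  have hkey : (1 - 2 * |β| * τ) * ‖ψ‖ ^ 2 ≤ ‖a‖ ^ 2 + 2 * α * τ := by
    nlinarith [sq_nonneg (‖a‖ - ‖ψ‖), mul_le_mul_of_nonneg_left h2 hτ.le, mul_le_mul_of_nonneg_left (mul_le_mul_of_nonneg_right hβ (sq_nonneg ‖ψ‖)) hτ.le]
  have hψsq : ‖ψ‖ ^ 2 ≤ (‖a‖ ^ 2 + 2 * α * τ) / (1 - 2 * |β| * τ) := by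
    rw [le_div_iff₀ hden]; linarith
  have hnum : 0 ≤ ‖a‖ ^ 2 + 2 * α * τ := by positivity
  calc ‖ψ‖ ^ (2 * m) = (‖ψ‖ ^ 2) ^ m := by rw [← pow_mul]
    _ ≤ ((‖a‖ ^ 2 + 2 * α * τ) / (1 - 2 * |β| * τ)) ^ m :=
        pow_le_pow_left₀ (by positivity) hψsq m
    _ = (‖a‖ ^ 2 + 2 * α * τ) ^ m / (1 - 2 * |β| * τ) ^ m := by rw [div_pow]
    _ ≤ (2 ^ (m - 1) * ((‖a‖ ^ 2) ^ m + (2 * α * τ) ^ m)) / (1 - 2 * |β| * τ) ^ m := by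
        apply div_le_div_of_nonneg_right ?_ (by positivity)
        · exact add_pow_le (by positivity) (by positivity) m
    _ = ((2 : ℝ) ^ (m - 1) / (1 - 2 * |β| * τ) ^ m)
          * (‖a‖ ^ (2 * m) + (2 * α * τ) ^ m) := by
        rw [← pow_mul]; ring
end

section
/- Let f : ℝ^d → ℝ^d satisfy the polynomial growth condition with constants C_Φ ≥ 1 and s ≥ 1. Let τ > 0, let a ∈ ℝ^d, and let ψ ∈ ℝ^d satisfy ψ = a + τ f(ψ). Then ‖f(a) − f(ψ)‖ ≤ τ C_Φ (1 + ‖a‖^s + ‖ψ‖^s) · (C_Φ(1 + ‖ψ‖^s)‖ψ‖ + ‖f(0)‖). -/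
/-- pointwise bound on the defect of the implicit Euler step against the
vector field, under the polynomial growth condition. -/
theorem implicit_euler_defect_bound (d : ℕ)
    (f : EuclideanSpace ℝ (Fin d) → EuclideanSpace ℝ (Fin d))
    (CPhi s : ℝ) (hC : 1 ≤ CPhi) (hs : 1 ≤ s)
    (hpoly : ∀ a b : EuclideanSpace ℝ (Fin d),
      ‖f a - f b‖ ≤ CPhi * (1 + ‖a‖ ^ s + ‖b‖ ^ s) * ‖a - b‖)
    (τ : ℝ) (hτ : 0 < τ)
    (a ψ : EuclideanSpace ℝ (Fin d)) (hψ : ψ = a + τ • f ψ) :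
    ‖f a - f ψ‖ ≤ τ * CPhi * (1 + ‖a‖ ^ s + ‖ψ‖ ^ s)
      * (CPhi * (1 + ‖ψ‖ ^ s) * ‖ψ‖ + ‖f 0‖) := by
  have hab : a - ψ = -(τ • f ψ) := by nth_rewrite 1 [hψ]; abel
  have hnorm : ‖a - ψ‖ = τ * ‖f ψ‖ := by
    rw [hab, norm_neg, norm_smul, Real.norm_eq_abs, abs_of_pos hτ]
  have hfψ : ‖f ψ‖ ≤ CPhi * (1 + ‖ψ‖ ^ s) * ‖ψ‖ + ‖f 0‖ := by
    have h1 := hpoly ψ 0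
    have h0 : (0:ℝ) ^ s = 0 := Real.zero_rpow (by linarith)
    calc ‖f ψ‖ ≤ ‖f ψ - f 0‖ + ‖f 0‖ := by
          simpa using norm_add_le (f ψ - f 0) (f 0)
      _ ≤ CPhi * (1 + ‖ψ‖ ^ s) * ‖ψ‖ + ‖f 0‖ := by
          have : ‖f ψ - f 0‖ ≤ CPhi * (1 + ‖ψ‖ ^ s) * ‖ψ‖ := by
            simpa [h0] using h1
          linarith
  have hnn : 0 ≤ CPhi * (1 + ‖a‖ ^ s + ‖ψ‖ ^ s) := by
    have ha := Real.rpow_nonneg (norm_nonneg a) s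
    have hb := Real.rpow_nonneg (norm_nonneg ψ) s
    positivity
  calc ‖f a - f ψ‖ ≤ CPhi * (1 + ‖a‖ ^ s + ‖ψ‖ ^ s) * ‖a - ψ‖ := hpoly a ψ
    _ = CPhi * (1 + ‖a‖ ^ s + ‖ψ‖ ^ s) * (τ * ‖f ψ‖) := by rw [hnorm]
    _ ≤ CPhi * (1 + ‖a‖ ^ s + ‖ψ‖ ^ s) * (τ * (CPhi * (1 + ‖ψ‖ ^ s) * ‖ψ‖ + ‖f 0‖)) := by
        apply mul_le_mul_of_nonneg_left _ hnn
        exact mul_le_mul_of_nonneg_left hfψ hτ.le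
    _ = τ * CPhi * (1 + ‖a‖ ^ s + ‖ψ‖ ^ s) * (CPhi * (1 + ‖ψ‖ ^ s) * ‖ψ‖ + ‖f 0‖) := by ring
end

section
/- Let f : ℝ^d → ℝ^d satisfy the polynomial growth condition with constants C_Φ ≥ 1 and s ≥ 1 (denote the Lipschitz-type constant by D := C_Φ). Let τ > 0, let a, b ∈ ℝ^d, and let ψ_a, ψ_b ∈ ℝ^d satisfy ψ_a = a + τ f(ψ_a) and ψ_b = b + τ f(ψ_b). Then ‖ψ_a − ψ_b‖² · (1 − (1 + τ) τ D² (1 + ‖ψ_a‖^s + ‖ψ_b‖^s)²) ≤ (1 + τ) ‖a − b‖². -/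
/-- conditional contractivity estimate for the implicit Euler map under the
polynomial growth condition. -/
theorem implicit_euler_conditional_contractivity (d : ℕ)
    (f : EuclideanSpace ℝ (Fin d) → EuclideanSpace ℝ (Fin d))
    (D s : ℝ) (hD : 1 ≤ D) (hs : 1 ≤ s)
    (hpoly : ∀ a b : EuclideanSpace ℝ (Fin d),
      ‖f a - f b‖ ≤ D * (1 + ‖a‖ ^ s + ‖b‖ ^ s) * ‖a - b‖)
    (τ : ℝ) (hτ : 0 < τ)
    (a b ψa ψb : EuclideanSpace ℝ (Fin d))
    (hψa : ψa = a + τ • f ψa) (hψb : ψb = b + τ • f ψb) :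
    ‖ψa - ψb‖ ^ 2 * (1 - (1 + τ) * τ * D ^ 2 * (1 + ‖ψa‖ ^ s + ‖ψb‖ ^ s) ^ 2)
      ≤ (1 + τ) * ‖a - b‖ ^ 2 := by
  set K : ℝ := 1 + ‖ψa‖ ^ s + ‖ψb‖ ^ s with hKdef
  set X : ℝ := ‖ψa - ψb‖ with hXdef
  set A : ℝ := ‖a - b‖ with hAdef
  have hXnn : 0 ≤ X := norm_nonneg _
  have hAnn : 0 ≤ A := norm_nonneg _
  have hKnn : 0 ≤ K := by
    have h1 := Real.rpow_nonneg (norm_nonneg ψa) s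
    have h2 := Real.rpow_nonneg (norm_nonneg ψb) s
    positivity
  have hdiff : ψa - ψb = (a - b) + τ • (f ψa - f ψb) := by
    conv_lhs => rw [hψa, hψb]
    module
  have hX : X ≤ A + τ * (D * K) * X := by
    have h := hpoly ψa ψb
    rw [← hKdef, ← hXdef] at h
    have h2 : τ * ‖f ψa - f ψb‖ ≤ τ * (D * K * X) :=
      mul_le_mul_of_nonneg_left h hτ.le
    calc X = ‖(a - b) + τ • (f ψa - f ψb)‖ := by rw [hXdef, hdiff]
    _ ≤ ‖a - b‖ + ‖τ • (f ψa - f ψb)‖ := norm_add_le _ _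
    _ = A + τ * ‖f ψa - f ψb‖ := by
        rw [norm_smul, Real.norm_eq_abs, abs_of_pos hτ]
    _ ≤ A + τ * (D * K) * X := by linarith
  have hY : 0 ≤ τ * (D * K) * X :=
    mul_nonneg (mul_nonneg hτ.le (mul_nonneg (by linarith) hKnn)) hXnn
  have hsq : X ^ 2 ≤ (A + τ * (D * K) * X) ^ 2 := by nlinarith
  nlinarith [hsq, mul_nonneg hτ.le (sq_nonneg (A - D * K * X))]
end
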